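/- arXiv:2405.13140 — 2 statements merged into one kernel-verified Lean document; each statement's English description precedes it below -/
import Mathlib

section
/- Let η > 0, d ≥ 1, and let f : ℝ → ℝ^d be continuously differentiable with ‖f'(s)‖₂ ≤ M for all s ∈ [0, η]. Then ‖ ∫₀^η ∫₀^t f(s) ds dt − (η/2) ∫₀^η f(s) ds ‖₂ ≤ M η³ / 12. -/
/-!
Integrating by parts, the iterated integral equals `∫₀^η (η - t) • f t`, so the quantity to bound
is `∫₀^η (η/2 - t) • f t`. The weight `η/2 - t` has mean zero, so `f t` may be replaced by
`f t - f (η/2)`, whose norm is at most `M |t - η/2|` by the mean value inequality; this leaves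
`M ∫₀^η (t - η/2)² dt = M η³ / 12`.
-/

open Set intervalIntegral
open MeasureTheory (volume)

theorem integral_midpoint_sub (a b : ℝ) : ∫ t in a..b, ((a + b) / 2 - t) = 0 := by
  simp only [integral_sub intervalIntegrable_const intervalIntegrable_id,
    intervalIntegral.integral_const, integral_id, smul_eq_mul]
  ring

theorem integral_sub_midpoint_sq (a b : ℝ) :
    ∫ t in a..b, (t - (a + b) / 2) ^ 2 = (b - a) ^ 3 / 12 := by
  rw [integral_comp_sub_right (fun t => t ^ 2), integral_pow]
  ring

section

variable {E : Type*} [NormedAddCommGroup E] [NormedSpace ℝ E] [CompleteSpace E]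

theorem integral_integral_eq_integral_sub_smul {f : ℝ → E} (hf : Continuous f) (a b : ℝ) :
    ∫ t in a..b, ∫ s in a..t, f s = ∫ t in a..b, (b - t) • f t := by
  set F : ℝ → E := fun t => ∫ s in a..t, f s
  have hF : ∀ t, HasDerivAt F (f t) t := fun t => (hf.integral_hasStrictDerivAt a t).hasDerivAt
  have hFc : Continuous F := continuous_iff_continuousAt.2 fun t => (hF t).continuousAt
  have hG : ∀ t, HasDerivAt (fun t => (t - b) • F t) ((t - b) • f t + (1 : ℝ) • F t) t :=
    fun t => ((hasDerivAt_id t).sub_const b).smul (hF t)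
  -- `(t - b) • F t` vanishes at `t = b` and, as `F a = 0`, at `t = a`.
  have hparts : ∫ t in a..b, ((t - b) • f t + (1 : ℝ) • F t) = 0 := by
    rw [integral_eq_sub_of_hasDerivAt (fun t _ => hG t) ((by fun_prop : Continuous
      fun t => (t - b) • f t + (1 : ℝ) • F t).intervalIntegrable a b)]
    simp [F]
  rw [integral_add ((by fun_prop : Continuous fun t => (t - b) • f t).intervalIntegrable a b)
    ((by fun_prop : Continuous fun t => (1 : ℝ) • F t).intervalIntegrable a b)] at hparts
  simp only [one_smul] at hparts
  rw [eq_neg_of_add_eq_zero_right hparts, ← integral_neg]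
  simp only [← neg_smul, neg_sub]

theorem integral_integral_sub_half_smul_integral {f : ℝ → E} (hf : Continuous f) (a b : ℝ) :
    (∫ t in a..b, ∫ s in a..t, f s) - ((b - a) / 2) • ∫ t in a..b, f t
      = ∫ t in a..b, ((a + b) / 2 - t) • f t := by
  rw [integral_integral_eq_integral_sub_smul hf, ← intervalIntegral.integral_smul,
    ← integral_sub ((by fun_prop : Continuous fun t => (b - t) • f t).intervalIntegrable a b)
      ((by fun_prop : Continuous fun t => ((b - a) / 2) • f t).intervalIntegrable a b)]
  congr 1 with t
  rw [← sub_smul]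
  ring_nf

theorem integral_smul_sub_const_of_integral_eq_zero {a b : ℝ} {g : ℝ → ℝ} {f : ℝ → E}
    (hg : IntervalIntegrable g volume a b)
    (hgf : IntervalIntegrable (fun t => g t • f t) volume a b)
    (hg0 : ∫ t in a..b, g t = 0) (v : E) :
    ∫ t in a..b, g t • (f t - v) = ∫ t in a..b, g t • f t := by
  simp_rw [smul_sub]
  rw [integral_sub hgf (hg.smul_continuousOn continuousOn_const),
    intervalIntegral.integral_smul_const, hg0, zero_smul, sub_zero]

theorem norm_integral_integral_sub_half_smul_integral_le {f : ℝ → E} (hf : Continuous f)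
    {a b M : ℝ} (hab : a ≤ b)
    (hmid : ∀ t ∈ Icc a b, ‖f t - f ((a + b) / 2)‖ ≤ M * |t - (a + b) / 2|) :
    ‖(∫ t in a..b, ∫ s in a..t, f s) - ((b - a) / 2) • ∫ t in a..b, f t‖
      ≤ M * (b - a) ^ 3 / 12 := by
  set m := (a + b) / 2
  have hweighted : ∀ t ∈ Icc a b, ‖(m - t) • (f t - f m)‖ ≤ M * (t - m) ^ 2 := fun t ht => by
    rw [norm_smul, Real.norm_eq_abs, abs_sub_comm]
    calc |t - m| * ‖f t - f m‖ ≤ |t - m| * (M * |t - m|) := by gcongr; exact hmid t ht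
      _ = M * (t - m) ^ 2 := by rw [← sq_abs (t - m)]; ring
  rw [integral_integral_sub_half_smul_integral hf, ← integral_smul_sub_const_of_integral_eq_zero
    ((by fun_prop : Continuous fun t => m - t).intervalIntegrable a b)
    ((by fun_prop : Continuous fun t => (m - t) • f t).intervalIntegrable a b)
    (integral_midpoint_sub a b) (f m)]
  calc _ ≤ ∫ t in a..b, M * (t - m) ^ 2 :=
        norm_integral_le_of_norm_le hab
          (Filter.Eventually.of_forall fun t ht => hweighted t (Ioc_subset_Icc_self ht))
          ((by fun_prop : Continuous fun t => M * (t - m) ^ 2).intervalIntegrable a b)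
    _ = M * (b - a) ^ 3 / 12 := by rw [integral_const_mul, integral_sub_midpoint_sq]; ring

end

theorem stmt3_general {d : ℕ} {η M : ℝ} (hη : 0 < η)
    {f : ℝ → EuclideanSpace ℝ (Fin d)} (hf : ContDiff ℝ 1 f)
    (hM : ∀ s ∈ Set.Icc (0:ℝ) η, ‖deriv f s‖ ≤ M) :
    ‖(∫ t in (0:ℝ)..η, ∫ s in (0:ℝ)..t, f s) - (η / 2) • ∫ s in (0:ℝ)..η, f s‖
      ≤ M * η ^ 3 / 12 := by
  have hmid : ∀ t ∈ Icc 0 η, ‖f t - f ((0 + η) / 2)‖ ≤ M * |t - (0 + η) / 2| := fun t ht =>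
    (convex_Icc 0 η).norm_image_sub_le_of_norm_deriv_le
      (fun x _ => (hf.differentiable one_ne_zero).differentiableAt) hM ⟨by linarith, by linarith⟩ ht
  simpa using norm_integral_integral_sub_half_smul_integral_le hf.continuous hη.le hmid

/-- Quantitative bound for the difference between the iterated integral over the triangle and
half the full rectangle integral, for a vector-valued continuously differentiable `f`. -/
theorem stmt3 {d : ℕ} (hd : 1 ≤ d) {η M : ℝ} (hη : 0 < η)
    {f : ℝ → EuclideanSpace ℝ (Fin d)} (hf : ContDiff ℝ 1 f)
    (hM : ∀ s ∈ Set.Icc (0:ℝ) η, ‖deriv f s‖ ≤ M) :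
    ‖(∫ t in (0:ℝ)..η, ∫ s in (0:ℝ)..t, f s) - (η / 2) • ∫ s in (0:ℝ)..η, f s‖
      ≤ M * η ^ 3 / 12 :=
  stmt3_general hη hf hM
end

section
/- Let η > 0, let U : ℝ^d → ℝ be continuously differentiable, let V : ℝ^d → ℝ be three times continuously differentiable, let Q, P : [0, η] → ℝ^d be continuously differentiable and satisfy Q'(t) = ∇V(P(t)), P'(t) = −∇U(Q(t)), Q(0) = q, P(0) = p, and let q̂ = q + η∇V(p − (η/2)∇U(q)) be the position component of the one-step leapfrog update. Then q̂ − Q(η) = ∫₀^η ∫₀¹ ∇²V( s(p − (η/2)∇U(q)) + (1−s)P(t) ) ( ∫₀^t (∇U(Q(τ)) − ∇U(q)) dτ ) ds dt − ∫₀¹ ∫₀^η (1−s)·(τ/2)(η−τ)· w(s,τ) dτ ds, where w(s,τ) ∈ ℝ^d is the vector whose k-th component equals Σ_{i,j=1}^d ∂³V/∂x_i∂x_j∂x_k ( s(p − (η/2)∇U(q)) + (1−s)P(τ) ) · (∇U(Q(τ)))_i · (∇U(q))_j. -/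
/-!
Put `x = p - (η / 2) ∇U(q)`. The fundamental theorem of calculus gives
`q̂ - Q(η) = ∫₀^η (∇V(x) - ∇V(P(t))) dt` and
`x - P(t) = ∫₀^t (∇U(Q(τ)) - ∇U(q)) dτ + (t - η / 2) ∇U(q)`. Integrating `∇²V` along the segment
from `P(t)` to `x` splits the integrand accordingly; the first part is the first term of the claim.
In the second part the weight `t - η / 2` is the derivative of `-(t / 2)(η - t)`, which vanishes at
`t = 0` and `t = η`. After exchanging the order of integration, one integration by parts in `t`
moves the derivative onto `t ↦ ∇²V(s x + (1 - s) P(t)) ∇U(q)`, whose derivative is the third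
derivative of `V` contracted with `-(1 - s) ∇U(Q(t))` and `∇U(q)`.
-/

open MeasureTheory intervalIntegral Set InnerProductSpace Function
open scoped Interval

section IntervalIntegral

variable {E : Type*} [NormedAddCommGroup E] [NormedSpace ℝ E]

theorem continuousOn_parametric_intervalIntegral_of_continuousOn {f : ℝ → ℝ → E}
    {a b c e : ℝ} (hab : a ≤ b) (hce : c ≤ e)
    (hf : ContinuousOn (uncurry f) (Icc a b ×ˢ Icc c e)) :
    ContinuousOn (fun x => ∫ t in c..e, f x t) (Icc a b) := by
  let g : ℝ → ℝ → E := fun x t => f (projIcc a b hab x) (projIcc c e hce t)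
  have hg : Continuous (uncurry g) :=
    show Continuous (uncurry f ∘ fun z : ℝ × ℝ => (↑(projIcc a b hab z.1), ↑(projIcc c e hce z.2)))
    from hf.comp_continuous (by fun_prop)
      fun z => ⟨(projIcc a b hab z.1).2, (projIcc c e hce z.2).2⟩
  refine (continuous_parametric_intervalIntegral_of_continuous' hg c e).continuousOn.congr
    fun x hx => integral_congr fun t ht => ?_
  rw [uIcc_of_le hce] at ht
  simp [g, projIcc_of_mem hab hx, projIcc_of_mem hce ht]

theorem ContinuousOn.intervalIntegral_intervalIntegral_add {f g : ℝ → ℝ → E} {a b c e : ℝ}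
    (hab : a ≤ b) (hce : c ≤ e) (hf : ContinuousOn (uncurry f) (Icc a b ×ˢ Icc c e))
    (hg : ContinuousOn (uncurry g) (Icc a b ×ˢ Icc c e)) :
    ∫ x in a..b, ∫ t in c..e, (f x t + g x t)
      = (∫ x in a..b, ∫ t in c..e, f x t) + ∫ x in a..b, ∫ t in c..e, g x t := by
  have hslice : ∀ {h : ℝ → ℝ → E}, ContinuousOn (uncurry h) (Icc a b ×ˢ Icc c e) →
      ∀ x ∈ Icc a b, IntervalIntegrable (h x) volume c e := fun hh x hx =>
    (hh.comp (continuousOn_const.prodMk continuousOn_id) fun _ ht => ⟨hx, ht⟩)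
      |>.intervalIntegrable_of_Icc hce
  have hint : ∀ {h : ℝ → ℝ → E}, ContinuousOn (uncurry h) (Icc a b ×ˢ Icc c e) →
      IntervalIntegrable (fun x => ∫ t in c..e, h x t) volume a b := fun hh =>
    (continuousOn_parametric_intervalIntegral_of_continuousOn hab hce hh)
      |>.intervalIntegrable_of_Icc hab
  rw [← integral_add (hint hf) (hint hg)]
  refine integral_congr fun x hx => ?_
  rw [uIcc_of_le hab] at hx
  exact integral_add (hslice hf x hx) (hslice hg x hx)

theorem ContinuousOn.intervalIntegral_intervalIntegral_swap {f : ℝ → ℝ → E}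
    {a b c e : ℝ} (hab : a ≤ b) (hce : c ≤ e)
    (hf : ContinuousOn (uncurry f) (Icc a b ×ˢ Icc c e)) :
    ∫ x in a..b, ∫ t in c..e, f x t = ∫ t in c..e, ∫ x in a..b, f x t := by
  have hint : Integrable (uncurry f)
      ((volume.restrict (Ioc a b)).prod (volume.restrict (Ioc c e))) := by
    rw [Measure.prod_restrict, ← Measure.volume_eq_prod]
    exact (hf.integrableOn_compact (isCompact_Icc.prod isCompact_Icc)).mono_set
      (prod_mono Ioc_subset_Icc_self Ioc_subset_Icc_self)
  simp only [integral_of_le hab, integral_of_le hce]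
  exact integral_integral_swap hint

theorem add_smul_sub_eq_integral_sub [CompleteSpace E] {Q v : ℝ → E} {η : ℝ} (hη : 0 ≤ η)
    (hQ : ∀ t ∈ Icc 0 η, HasDerivAt Q (v t) t) (hv : ContinuousOn v (Icc 0 η)) (y : E) :
    Q 0 + η • y - Q η = ∫ t in (0:ℝ)..η, (y - v t) := by
  have hvi : IntervalIntegrable v volume 0 η := hv.intervalIntegrable_of_Icc hη
  rw [integral_sub intervalIntegrable_const hvi, intervalIntegral.integral_const,
    integral_eq_sub_of_hasDerivAt (fun t ht => hQ t (uIcc_of_le hη ▸ ht)) hvi]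
  module

theorem sub_smul_sub_eq_integral_sub_add_smul [CompleteSpace E] {P f : ℝ → E} {η t : ℝ}
    (hf : ContinuousOn f (Icc 0 η)) (hP : ∀ t ∈ Icc 0 η, HasDerivAt P (-f t) t) (c : ℝ)
    (ht : t ∈ Icc 0 η) :
    P 0 - c • f 0 - P t = (∫ τ in (0:ℝ)..t, (f τ - f 0)) + (t - c) • f 0 := by
  have hsub : [[0, t]] ⊆ Icc 0 η := by
    rw [uIcc_of_le ht.1]; exact Icc_subset_Icc le_rfl ht.2
  have hfi : IntervalIntegrable f volume 0 t := (hf.mono hsub).intervalIntegrable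
  have hPt := integral_eq_sub_of_hasDerivAt (fun τ hτ => hP τ (hsub hτ)) hfi.neg
  rw [intervalIntegral.integral_neg, neg_eq_iff_eq_neg, neg_sub] at hPt
  rw [integral_sub hfi intervalIntegrable_const, intervalIntegral.integral_const, hPt]
  module

theorem integral_sub_half_smul_eq_integral_smul_deriv [CompleteSpace E] {v v' : ℝ → E} {η : ℝ}
    (hv : ∀ t ∈ [[0, η]], HasDerivAt v (v' t) t) (hv' : ContinuousOn v' [[0, η]]) :
    ∫ t in (0:ℝ)..η, (t - η / 2) • v t = ∫ t in (0:ℝ)..η, (t / 2 * (η - t)) • v' t := by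
  have hu : ∀ t ∈ [[0, η]], HasDerivAt (fun t : ℝ => t / 2 * (η - t)) (η / 2 - t) t := fun t _ =>
    (((hasDerivAt_id' t).div_const 2).fun_mul ((hasDerivAt_id' t).const_sub η)).congr_deriv
      (by ring)
  rw [integral_smul_deriv_eq_deriv_smul hu hv
    ((continuous_const.sub continuous_id).intervalIntegrable _ _) hv'.intervalIntegrable]
  simp only [sub_self, mul_zero, zero_div, zero_mul, zero_smul, sub_zero, zero_sub,
    ← intervalIntegral.integral_neg, ← neg_smul, neg_sub]

end IntervalIntegral

section Segment

variable {E F : Type*} [NormedAddCommGroup E] [NormedSpace ℝ E] [NormedAddCommGroup F]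
  [NormedSpace ℝ F] [CompleteSpace F] {G : E → F}

theorem ContDiff.sub_eq_integral_fderiv_segment (hG : ContDiff ℝ 1 G) (x y : E) :
    G y - G x = ∫ s in (0:ℝ)..1, fderiv ℝ G (s • y + (1 - s) • x) (y - x) := by
  have hline : ∀ s : ℝ, HasDerivAt (fun s : ℝ => G (s • y + (1 - s) • x))
      (fderiv ℝ G (s • y + (1 - s) • x) (y - x)) s := by
    intro s
    have hseg : HasDerivAt (fun s : ℝ => s • y + (1 - s) • x) (y - x) s :=
      (((hasDerivAt_id s).smul_const y).add
        (((hasDerivAt_id s).const_sub 1).smul_const x)).congr_deriv (by simp [sub_eq_add_neg])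
    exact ((hG.differentiable one_ne_zero _).hasFDerivAt).comp_hasDerivAt s hseg
  have hDG := hG.continuous_fderiv one_ne_zero
  rw [integral_eq_sub_of_hasDerivAt (fun s _ => hline s)
    (Continuous.intervalIntegrable (by fun_prop) _ _)]
  simp

theorem ContDiff.sub_eq_integral_fderiv_integral_add_smul [CompleteSpace E]
    (hG : ContDiff ℝ 1 G) {P f : ℝ → E} {η t : ℝ} (hf : ContinuousOn f (Icc 0 η))
    (hP : ∀ t ∈ Icc 0 η, HasDerivAt P (-f t) t) (c : ℝ) (ht : t ∈ Icc 0 η) :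
    G (P 0 - c • f 0) - G (P t) = ∫ s in (0:ℝ)..1,
      (fderiv ℝ G (s • (P 0 - c • f 0) + (1 - s) • P t) (∫ τ in (0:ℝ)..t, (f τ - f 0))
        + (t - c) • fderiv ℝ G (s • (P 0 - c • f 0) + (1 - s) • P t) (f 0)) := by
  rw [hG.sub_eq_integral_fderiv_segment, sub_smul_sub_eq_integral_sub_add_smul hf hP c ht]
  simp only [map_add, map_smul]

end Segment

section Gradient

variable {F : Type*} [NormedAddCommGroup F] [InnerProductSpace ℝ F] [CompleteSpace F]

theorem ContDiff.gradient {f : F → ℝ} {n : WithTop ℕ∞} (hf : ContDiff ℝ (n + 1) f) :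
    ContDiff ℝ n (gradient f) :=
  (toDual ℝ F).symm.contDiff.comp (hf.fderiv_right le_rfl)

theorem fderiv_gradient_apply (f : F → ℝ) (x a : F) :
    fderiv ℝ (gradient f) x a = (toDual ℝ F).symm (fderiv ℝ (fderiv ℝ f) x a) := by
  rw [show gradient f = (toDual ℝ F).symm ∘ fderiv ℝ f from rfl, LinearIsometryEquiv.comp_fderiv]
  rfl

theorem HasDerivAt.fderiv_gradient_apply {f : F → ℝ} (hf : ContDiff ℝ 3 f) {c : ℝ → F}
    {c' : F} {t : ℝ} (hc : HasDerivAt c c' t) (b : F) :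
    HasDerivAt (fun t => fderiv ℝ (gradient f) (c t) b)
      ((toDual ℝ F).symm (fderiv ℝ (fderiv ℝ (fderiv ℝ f)) (c t) c' b)) t := by
  have hD2 : ContDiff ℝ 1 (fderiv ℝ (fderiv ℝ f)) :=
    (hf.fderiv_right (m := 2) (by norm_num)).fderiv_right (m := 1) (by norm_num)
  have hD3 : HasDerivAt (fun t => fderiv ℝ (fderiv ℝ f) (c t) b)
      (fderiv ℝ (fderiv ℝ (fderiv ℝ f)) (c t) c' b) t := by
    simpa using ((hD2.differentiable one_ne_zero (c t)).hasFDerivAt.comp_hasDerivAt t hc).clm_apply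
      (hasDerivAt_const t b)
  simp only [_root_.fderiv_gradient_apply]
  exact (toDual ℝ F).symm.hasFDerivAt.comp_hasDerivAt t hD3

variable {U V : F → ℝ} {P Q : ℝ → F} {η : ℝ}

theorem integral_sub_half_smul_fderiv_gradient_eq (hη : 0 ≤ η) (hU : Continuous (gradient U))
    (hV : ContDiff ℝ 3 V) (hQ : ContinuousOn Q (Icc 0 η))
    (hP : ∀ t ∈ Icc 0 η, HasDerivAt P (-gradient U (Q t)) t) (x g : F) (s : ℝ) :
    ∫ t in (0:ℝ)..η, (t - η / 2) • fderiv ℝ (gradient V) (s • x + (1 - s) • P t) g =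
      -∫ t in (0:ℝ)..η, ((1 - s) * (t / 2 * (η - t))) • (toDual ℝ F).symm
        (fderiv ℝ (fderiv ℝ (fderiv ℝ V)) (s • x + (1 - s) • P t) (gradient U (Q t)) g) := by
  have hPc : ContinuousOn P (Icc 0 η) := fun t ht => (hP t ht).continuousAt.continuousWithinAt
  have hD3 : Continuous (fderiv ℝ (fderiv ℝ (fderiv ℝ V))) :=
    ((hV.fderiv_right (m := 2) (by norm_num)).fderiv_right (m := 1) (by norm_num)).continuous_fderiv
      one_ne_zero
  have hc : ∀ t ∈ Icc 0 η, HasDerivAt (fun t => s • x + (1 - s) • P t)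
      ((1 - s) • -gradient U (Q t)) t := fun t ht =>
    ((hP t ht).const_smul (1 - s)).const_add (s • x)
  have hv' : ContinuousOn (fun t => (toDual ℝ F).symm (fderiv ℝ (fderiv ℝ (fderiv ℝ V))
      (s • x + (1 - s) • P t) ((1 - s) • -gradient U (Q t)) g)) (Icc 0 η) :=
    (toDual ℝ F).symm.continuous.comp_continuousOn <|
      ((hD3.comp_continuousOn (continuousOn_const.add (hPc.const_smul (1 - s)))).clm_apply
        ((hU.comp_continuousOn hQ).neg.const_smul (1 - s))).clm_apply continuousOn_const
  rw [← uIcc_of_le hη] at hc hv'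
  rw [integral_sub_half_smul_eq_integral_smul_deriv
    (fun t ht => (hc t ht).fderiv_gradient_apply hV g) hv', ← intervalIntegral.integral_neg]
  refine integral_congr fun t _ => ?_
  simp only [map_smul, FunLike.coe_smul, Pi.smul_apply, smul_neg, smul_smul, ← neg_smul]
  ring_nf

theorem integral_integral_fderiv_gradient_add_eq (hη : 0 ≤ η) (hU : Continuous (gradient U))
    (hV : ContDiff ℝ 3 V) (hQ : ContinuousOn Q (Icc 0 η))
    (hP : ∀ t ∈ Icc 0 η, HasDerivAt P (-gradient U (Q t)) t) (x g : F) :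
    ∫ t in (0:ℝ)..η, ∫ s in (0:ℝ)..1,
        (fderiv ℝ (gradient V) (s • x + (1 - s) • P t) (∫ τ in (0:ℝ)..t, (gradient U (Q τ) - g))
          + (t - η / 2) • fderiv ℝ (gradient V) (s • x + (1 - s) • P t) g)
      = (∫ t in (0:ℝ)..η, ∫ s in (0:ℝ)..1,
          fderiv ℝ (gradient V) (s • x + (1 - s) • P t) (∫ τ in (0:ℝ)..t, (gradient U (Q τ) - g)))
        - ∫ s in (0:ℝ)..1, ∫ τ in (0:ℝ)..η, ((1 - s) * (τ / 2 * (η - τ))) • (toDual ℝ F).symm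
            (fderiv ℝ (fderiv ℝ (fderiv ℝ V)) (s • x + (1 - s) • P τ) (gradient U (Q τ)) g) := by
  have hPc : ContinuousOn P (Icc 0 η) := fun t ht => (hP t ht).continuousAt.continuousWithinAt
  have hI : ContinuousOn (fun t => ∫ τ in (0:ℝ)..t, (gradient U (Q τ) - g)) (Icc 0 η) := by
    have hUQ := (hU.comp_continuousOn hQ).sub (continuousOn_const (c := g))
    rw [← uIcc_of_le hη] at hUQ ⊢
    exact continuousOn_primitive_interval (μ := volume) (hUQ.integrableOn_compact isCompact_uIcc)
  have hseg : ContinuousOn (fun z : ℝ × ℝ => z.2 • x + (1 - z.2) • P z.1) (Icc 0 η ×ˢ Icc 0 1) :=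
    (continuousOn_snd.smul continuousOn_const).add
      ((continuousOn_const.sub continuousOn_snd).smul (hPc.comp continuousOn_fst fun z hz => hz.1))
  have hDGV := ((hV.gradient (n := 2)).continuous_fderiv (by norm_num)).comp_continuousOn hseg
  have hA : ContinuousOn (uncurry fun t s : ℝ => fderiv ℝ (gradient V) (s • x + (1 - s) • P t)
      (∫ τ in (0:ℝ)..t, (gradient U (Q τ) - g))) (Icc 0 η ×ˢ Icc 0 1) :=
    hDGV.clm_apply (hI.comp continuousOn_fst fun z hz => hz.1)
  have hB : ContinuousOn (uncurry fun t s : ℝ =>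
      (t - η / 2) • fderiv ℝ (gradient V) (s • x + (1 - s) • P t) g) (Icc 0 η ×ˢ Icc 0 1) :=
    (continuousOn_fst.sub continuousOn_const).smul (hDGV.clm_apply continuousOn_const)
  rw [hA.intervalIntegral_intervalIntegral_add hη zero_le_one hB,
    hB.intervalIntegral_intervalIntegral_swap hη zero_le_one, sub_eq_add_neg]
  simp only [integral_sub_half_smul_fderiv_gradient_eq hη hU hV hQ hP,
    intervalIntegral.integral_neg]

end Gradient

section Euclidean

variable {d : ℕ}

theorem EuclideanSpace.toDual_symm_apply (L : StrongDual ℝ (EuclideanSpace ℝ (Fin d)))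
    (k : Fin d) : (toDual ℝ _).symm L k = L (EuclideanSpace.single k 1) := by
  rw [← InnerProductSpace.toDual_symm_apply, EuclideanSpace.inner_single_right]
  simp

theorem ContinuousLinearMap.apply_apply_eq_sum_single {G : Type*} [NormedAddCommGroup G]
    [NormedSpace ℝ G] (T : EuclideanSpace ℝ (Fin d) →L[ℝ] EuclideanSpace ℝ (Fin d) →L[ℝ] G)
    (a b : EuclideanSpace ℝ (Fin d)) :
    T a b = ∑ i, ∑ j, (a i * b j) • T (EuclideanSpace.single i 1) (EuclideanSpace.single j 1) := by
  conv_lhs => rw [← (EuclideanSpace.basisFun (Fin d) ℝ).sum_repr a,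
    ← (EuclideanSpace.basisFun (Fin d) ℝ).sum_repr b]
  simp only [EuclideanSpace.basisFun_repr, EuclideanSpace.basisFun_apply, map_sum, map_smul,
    FunLike.coe_sum, Finset.sum_apply, FunLike.coe_smul, Pi.smul_apply, smul_smul, Finset.smul_sum]
  rw [Finset.sum_comm]
  exact Finset.sum_congr rfl fun i _ => Finset.sum_congr rfl fun j _ => by rw [mul_comm]

theorem EuclideanSpace.toDual_symm_fderiv_fderiv_fderiv_apply
    (V : EuclideanSpace ℝ (Fin d) → ℝ) (x a b : EuclideanSpace ℝ (Fin d)) (k : Fin d) :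
    (toDual ℝ _).symm (fderiv ℝ (fderiv ℝ (fderiv ℝ V)) x a b) k = ∑ i, ∑ j,
      iteratedFDeriv ℝ 3 V x ![EuclideanSpace.single i 1, EuclideanSpace.single j 1,
        EuclideanSpace.single k 1] * a i * b j := by
  rw [EuclideanSpace.toDual_symm_apply,
    ContinuousLinearMap.apply_apply_eq_sum_single (fderiv ℝ (fderiv ℝ (fderiv ℝ V)) x)]
  simp only [FunLike.coe_sum, Finset.sum_apply, FunLike.coe_smul, Pi.smul_apply, smul_eq_mul]
  refine Finset.sum_congr rfl fun i _ => Finset.sum_congr rfl fun j _ => ?_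
  rw [iteratedFDeriv_succ_apply_right, iteratedFDeriv_two_apply, mul_comm, ← mul_assoc]
  rfl

end Euclidean

/-- Exact decomposition of the position error of one leapfrog step versus the exact
Hamiltonian flow, for general kinetic energy `V`. -/
theorem stmt4 {d : ℕ} {η : ℝ} (hη : 0 < η)
    {U V : EuclideanSpace ℝ (Fin d) → ℝ}
    (hU : ContDiff ℝ 1 U) (hV : ContDiff ℝ 3 V)
    (q p : EuclideanSpace ℝ (Fin d))
    (Q P : ℝ → EuclideanSpace ℝ (Fin d))
    (hQ' : ∀ t ∈ Set.Icc (0:ℝ) η, HasDerivAt Q (gradient V (P t)) t)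
    (hP' : ∀ t ∈ Set.Icc (0:ℝ) η, HasDerivAt P (-(gradient U (Q t))) t)
    (hQ0 : Q 0 = q) (hP0 : P 0 = p)
    (w : ℝ → ℝ → EuclideanSpace ℝ (Fin d))
    (hw : ∀ s τ : ℝ, ∀ k : Fin d, w s τ k =
      ∑ i, ∑ j,
        iteratedFDeriv ℝ 3 V (s • (p - (η / 2) • gradient U q) + (1 - s) • P τ)
            ![EuclideanSpace.single i 1, EuclideanSpace.single j 1, EuclideanSpace.single k 1]
          * gradient U (Q τ) i * gradient U q j) :
    q + η • gradient V (p - (η / 2) • gradient U q) - Q η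
      = (∫ t in (0:ℝ)..η, ∫ s in (0:ℝ)..1,
            (fderiv ℝ (gradient V) (s • (p - (η / 2) • gradient U q) + (1 - s) • P t))
              (∫ τ in (0:ℝ)..t, (gradient U (Q τ) - gradient U q)))
        - ∫ s in (0:ℝ)..1, ∫ τ in (0:ℝ)..η, ((1 - s) * (τ / 2 * (η - τ))) • w s τ := by
  subst hQ0 hP0
  have hGU : Continuous (gradient U) := (hU.gradient (n := 0)).continuous
  have hGV : ContDiff ℝ 2 (gradient V) := hV.gradient
  have hPc : ContinuousOn P (Icc 0 η) := fun t ht => (hP' t ht).continuousAt.continuousWithinAt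
  have hQc : ContinuousOn Q (Icc 0 η) := fun t ht => (hQ' t ht).continuousAt.continuousWithinAt
  have hUQ : ContinuousOn (fun t => gradient U (Q t)) (Icc 0 η) := hGU.comp_continuousOn hQc
  set g := gradient U (Q 0)
  set x := P 0 - (η / 2) • g
  have hw' : w = fun s τ => (toDual ℝ _).symm
      (fderiv ℝ (fderiv ℝ (fderiv ℝ V)) (s • x + (1 - s) • P τ) (gradient U (Q τ)) g) := by
    ext s τ k
    rw [hw, EuclideanSpace.toDual_symm_fderiv_fderiv_fderiv_apply]
  calc Q 0 + η • gradient V x - Q η = ∫ t in (0:ℝ)..η, (gradient V x - gradient V (P t)) :=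
        add_smul_sub_eq_integral_sub hη.le hQ' (hGV.continuous.comp_continuousOn hPc) _
    _ = ∫ t in (0:ℝ)..η, ∫ s in (0:ℝ)..1,
          (fderiv ℝ (gradient V) (s • x + (1 - s) • P t) (∫ τ in (0:ℝ)..t, (gradient U (Q τ) - g))
            + (t - η / 2) • fderiv ℝ (gradient V) (s • x + (1 - s) • P t) g) :=
        integral_congr fun t ht =>
          (hGV.of_le (by norm_num)).sub_eq_integral_fderiv_integral_add_smul hUQ hP' (η / 2)
            (uIcc_of_le hη.le ▸ ht)
    _ = _ := by rw [integral_integral_fderiv_gradient_add_eq hη.le hGU hV hQc hP', hw']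
end
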